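/- Consider the networked system with self-loop node dynamics A = I_n: let Φ = I_{Nn} + W ⊗ (H·C), Ψ = Δ ⊗ B, and the sampled-data system Φ_s = e^{h}·I_{Nn} + (e^{h} − 1)·W ⊗ (H·C), Ψ_s = (e^{h} − 1)·Δ ⊗ B, where h > 0. Assume Φ_s is invertible (equivalently, 0 is not an eigenvalue of Φ_s). Then the sampled-data pair (Φ_s, Ψ_s) is controllable if and only if the continuous-time pair (Φ, Ψ) satisfies the PBH condition. -/

import Mathlib

open Matrix
open scoped Kronecker

/-- Entrywise complexification of a real matrix. -/
noncomputable def cpx {a b : Type*} (M : Matrix a b ℝ) : Matrix a b ℂ :=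
  M.map (Complex.ofReal)

/-- The matrix exponential `e^{M}`. -/
noncomputable def mexp {q : Type*} [Fintype q] [DecidableEq q]
    (M : Matrix q q ℝ) : Matrix q q ℝ :=
  NormedSpace.exp M

/-- The entrywise integral `∫₀ʰ e^{Aτ} dτ`. -/
noncomputable def intExp {q : Type*} [Fintype q] [DecidableEq q]
    (A : Matrix q q ℝ) (h : ℝ) : Matrix q q ℝ :=
  Matrix.of fun i j => ∫ τ in (0:ℝ)..h, (NormedSpace.exp (τ • A)) i j

/-- `θ` is an eigenvalue of the complex square matrix `M`. -/
def IsEig {q : Type*} [Fintype q] [DecidableEq q] (M : Matrix q q ℂ) (θ : ℂ) : Prop :=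
  (θ • (1 : Matrix q q ℂ) - M).det = 0

/-- PBH condition for a pair of complex matrices: for every `s ∈ ℂ`, the only row
vector `v` with `v (sI - M) = 0` and `v G = 0` is `v = 0`. -/
def PBH {q r : Type*} [Fintype q] [DecidableEq q] [Fintype r]
    (M : Matrix q q ℂ) (G : Matrix q r ℂ) : Prop :=
  ∀ (s : ℂ) (v : q → ℂ), v ᵥ* (s • (1 : Matrix q q ℂ) - M) = 0 → v ᵥ* G = 0 → v = 0

/-- Controllability of a discrete-time linear system `x⁺ = F x + G u`:
every state can be steered to the origin in finitely many steps. -/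
def Controllable {q r : Type*} [Fintype q] [DecidableEq q] [Fintype r]
    (F : Matrix q q ℝ) (G : Matrix q r ℝ) : Prop :=
  ∀ x : q → ℝ, ∃ (k : ℕ) (u : Fin k → r → ℝ),
    (F ^ k) *ᵥ x + ∑ j : Fin k, (F ^ (k - 1 - (j : ℕ))) *ᵥ (G *ᵥ u j) = 0

/-- `𝓑(h) = (∫₀ʰ e^{Aτ} dτ)·B`. -/
noncomputable def sampB {n p : ℕ} (A : Matrix (Fin n) (Fin n) ℝ)
    (B : Matrix (Fin n) (Fin p) ℝ) (h : ℝ) : Matrix (Fin n) (Fin p) ℝ :=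
  intExp A h * B

/-- `𝓗(h) = (∫₀ʰ e^{Aτ} dτ)·H·C`. -/
noncomputable def sampH {n m : ℕ} (A : Matrix (Fin n) (Fin n) ℝ)
    (H : Matrix (Fin n) (Fin m) ℝ) (C : Matrix (Fin m) (Fin n) ℝ) (h : ℝ) :
    Matrix (Fin n) (Fin n) ℝ :=
  intExp A h * H * C

/-- `Φ_s = I_N ⊗ e^{Ah} + W ⊗ 𝓗(h)`. -/
noncomputable def Phis {n m N : ℕ} (A : Matrix (Fin n) (Fin n) ℝ)
    (H : Matrix (Fin n) (Fin m) ℝ) (C : Matrix (Fin m) (Fin n) ℝ)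
    (W : Matrix (Fin N) (Fin N) ℝ) (h : ℝ) :
    Matrix (Fin N × Fin n) (Fin N × Fin n) ℝ :=
  (1 : Matrix (Fin N) (Fin N) ℝ) ⊗ₖ mexp (h • A) + W ⊗ₖ sampH A H C h

/-- `E_λ = e^{Ah} + λ·𝓗(h)` (complexified). -/
noncomputable def Emat {n m : ℕ} (A : Matrix (Fin n) (Fin n) ℝ)
    (H : Matrix (Fin n) (Fin m) ℝ) (C : Matrix (Fin m) (Fin n) ℝ)
    (h : ℝ) (lam : ℂ) : Matrix (Fin n) (Fin n) ℂ :=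
  cpx (mexp (h • A)) + lam • cpx (sampH A H C h)

/-!
Since `Φ_s = e^h I + (e^h - 1)(Φ - I)` and `Ψ_s = (e^h - 1) Ψ` with `e^h - 1 ≠ 0`, a row vector
is a left eigenvector of `Φ_s` annihilating `Ψ_s` iff it is one of `Φ` annihilating `Ψ`
(eigenvalue `λ ↦ e^h + (e^h - 1)(λ - 1)`), so the PBH conditions of the two pairs agree.

For a real pair `(F, G)` with `F` invertible, PBH is equivalent to steering every state to `0`.
If `v F = s v` and `v G = 0`, then `v · x_k = s^k (v · x_0)` along every trajectory, so reaching
`0` forces `v = 0` (as `s ≠ 0`). Conversely, the reachable subspaces increase and stabilize;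
were they not everything, some nonzero `w` would annihilate every `F^i G`, and the row vectors
with this property form a nonzero subspace invariant under `· F`, which contains a complex
eigenvector of `F` annihilating `G`.
-/

section PBH

variable {q r : Type*} [Fintype q] [DecidableEq q] [Fintype r]

theorem PBH_iff {M : Matrix q q ℂ} {G : Matrix q r ℂ} :
    PBH M G ↔ ∀ (s : ℂ) (v : q → ℂ), v ᵥ* M = s • v → v ᵥ* G = 0 → v = 0 := by
  have key : ∀ (s : ℂ) (v : q → ℂ), v ᵥ* (s • 1 - M) = 0 ↔ v ᵥ* M = s • v := by
    intro s v
    rw [vecMul_sub, vecMul_smul, vecMul_one, sub_eq_zero, eq_comm]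
  simp only [PBH, key]

theorem PBH_smul_right {M : Matrix q q ℂ} {G : Matrix q r ℂ} {b : ℂ} (hb : b ≠ 0) :
    PBH M (b • G) ↔ PBH M G := by
  simp only [PBH, vecMul_smul, smul_eq_zero, hb, false_or]

theorem PBH_smul_one_add_smul {M : Matrix q q ℂ} {G : Matrix q r ℂ} (c : ℂ) {a : ℂ}
    (ha : a ≠ 0) : PBH (c • 1 + a • M) G ↔ PBH M G := by
  have key : ∀ s : ℂ, s • 1 - (c • 1 + a • M) = a • (((s - c) / a) • 1 - M) := by
    intro s
    rw [smul_sub, smul_smul, mul_div_cancel₀ _ ha, sub_smul]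
    abel
  simp only [PBH, key, vecMul_smul, smul_eq_zero, ha, false_or]
  refine ⟨fun h s v => ?_, fun h s v => h _ v⟩
  simpa [mul_div_cancel_left₀ _ ha] using h (c + a * s) v

end PBH

section Reachability

variable {K : Type*} [Field K] {q r : Type*} [Fintype q] [DecidableEq q] [Fintype r]

noncomputable def reachMap (F : Matrix q q K) (G : Matrix q r K) (k : ℕ) :
    (Fin k → r → K) →ₗ[K] (q → K) :=
  ∑ j : Fin k, (F ^ (k - 1 - (j : ℕ)) * G).mulVecLin ∘ₗ LinearMap.proj j

theorem reachMap_apply (F : Matrix q q K) (G : Matrix q r K) (k : ℕ) (u : Fin k → r → K) :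
    reachMap F G k u = ∑ j : Fin k, F ^ (k - 1 - (j : ℕ)) *ᵥ (G *ᵥ u j) := by
  simp [reachMap, mulVec_mulVec]

theorem monotone_range_reachMap (F : Matrix q q K) (G : Matrix q r K) :
    Monotone fun k => LinearMap.range (reachMap F G k) := by
  refine monotone_nat_of_le_succ fun k => ?_
  rintro _ ⟨u, rfl⟩
  refine ⟨Fin.cons 0 u, ?_⟩
  simp only [reachMap_apply, Fin.sum_univ_succ, Fin.cons_zero, Fin.cons_succ, mulVec_zero,
    zero_add, Fin.val_succ]
  refine Finset.sum_congr rfl fun j _ => ?_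
  rw [show k + 1 - 1 - ((j : ℕ) + 1) = k - 1 - j by omega]

theorem mulVec_mem_range_reachMap (F : Matrix q q K) (G : Matrix q r K) (i : ℕ) (u : r → K) :
    (F ^ i * G) *ᵥ u ∈ LinearMap.range (reachMap F G (i + 1)) :=
  ⟨Fin.cons u 0, by simp [reachMap_apply, Fin.sum_univ_succ, mulVec_mulVec]⟩

theorem exists_range_reachMap_eq_top (F : Matrix q q K) (G : Matrix q r K)
    (h : ∀ w : q → K, (∀ i : ℕ, w ᵥ* (F ^ i * G) = 0) → w = 0) :
    ∃ k, LinearMap.range (reachMap F G k) = ⊤ := by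
  obtain ⟨k, hk⟩ := monotone_stabilizes_iff_noetherian.mpr inferInstance
    ⟨fun k => LinearMap.range (reachMap F G k), monotone_range_reachMap F G⟩
  refine ⟨k, by_contra fun hne => ?_⟩
  obtain ⟨f, hf0, hf⟩ := Submodule.exists_dual_map_eq_bot_of_lt_top
    (lt_top_iff_ne_top.mpr hne) inferInstance
  set w := (dotProductEquiv K q).symm f
  have hfw : ∀ y, f y = w ⬝ᵥ y := fun y => by
    simp [w, ← dotProductEquiv_apply_apply]
  have hw : ∀ i : ℕ, w ᵥ* (F ^ i * G) = 0 := fun i => dotProduct_eq_zero _ fun u => by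
    have hmem : (F ^ i * G) *ᵥ u ∈ LinearMap.range (reachMap F G k) := by
      rw [show LinearMap.range (reachMap F G k) = _ from hk _ (le_max_left k (i + 1))]
      exact monotone_range_reachMap F G (le_max_right k (i + 1))
        (mulVec_mem_range_reachMap F G i u)
    rw [← dotProduct_mulVec, ← hfw, ← Submodule.mem_bot K, ← hf]
    exact Submodule.mem_map_of_mem hmem
  exact hf0 (by simpa [w] using h w hw)

end Reachability

theorem exists_left_eigenvector_of_forall_vecMul_pow_mul_eq_zero {K : Type*} [Field K]
    [IsAlgClosed K] {q r : Type*} [Fintype q] [DecidableEq q] [Fintype r]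
    {M : Matrix q q K} {G : Matrix q r K} {w : q → K} (hw0 : w ≠ 0)
    (hw : ∀ i : ℕ, w ᵥ* (M ^ i * G) = 0) :
    ∃ (s : K) (v : q → K), v ≠ 0 ∧ v ᵥ* M = s • v ∧ v ᵥ* G = 0 := by
  let V : Submodule K (q → K) := ⨅ i : ℕ, LinearMap.ker (M ^ i * G).vecMulLinear
  have mem_V : ∀ x, x ∈ V ↔ ∀ i : ℕ, x ᵥ* (M ^ i * G) = 0 := by
    simp [V, Submodule.mem_iInf]
  have hMV : ∀ x ∈ V, M.vecMulLinear x ∈ V := by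
    simp only [mem_V, vecMulLinear_apply, vecMul_vecMul, ← Matrix.mul_assoc, ← pow_succ']
    exact fun x hx i => hx (i + 1)
  have : Nontrivial V := Submodule.nontrivial_iff_ne_bot.mpr fun hV =>
    hw0 <| (Submodule.mem_bot K).mp (hV ▸ (mem_V w).mpr hw)
  obtain ⟨s, hs⟩ := Module.End.exists_eigenvalue (M.vecMulLinear.restrict hMV)
  obtain ⟨v, hv⟩ := hs.exists_hasEigenvector
  refine ⟨s, v, fun h => hv.2 (Subtype.ext h), ?_, by simpa using (mem_V v).mp v.2 0⟩
  simpa [LinearMap.restrict_apply] using congrArg Subtype.val hv.apply_eq_smul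

section Complexification

variable {q r : Type*} [Fintype q] [DecidableEq q] [Fintype r]

theorem cpx_add {a b : Type*} (M N : Matrix a b ℝ) : cpx (M + N) = cpx M + cpx N :=
  Matrix.map_add _ Complex.ofReal_add M N

theorem cpx_smul {a b : Type*} (c : ℝ) (M : Matrix a b ℝ) : cpx (c • M) = (c : ℂ) • cpx M := by
  ext; simp [cpx]

theorem cpx_one {a : Type*} [DecidableEq a] : cpx (1 : Matrix a a ℝ) = 1 :=
  Matrix.map_one _ Complex.ofReal_zero Complex.ofReal_one

theorem cpx_mul {a b c : Type*} [Fintype b] (M : Matrix a b ℝ) (N : Matrix b c ℝ) :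
    cpx (M * N) = cpx M * cpx N :=
  Matrix.map_mul (f := Complex.ofRealHom)

theorem cpx_pow (M : Matrix q q ℝ) (k : ℕ) : cpx (M ^ k) = cpx M ^ k :=
  map_pow Complex.ofRealHom.mapMatrix M k

theorem ofReal_comp_mulVec {a b : Type*} [Fintype b] (M : Matrix a b ℝ) (x : b → ℝ) :
    Complex.ofReal ∘ (M *ᵥ x) = cpx M *ᵥ (Complex.ofReal ∘ x) :=
  funext (Complex.ofRealHom.map_mulVec M x)

theorem ofReal_comp_vecMul {a b : Type*} [Fintype a] (M : Matrix a b ℝ) (x : a → ℝ) :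
    Complex.ofReal ∘ (x ᵥ* M) = (Complex.ofReal ∘ x) ᵥ* cpx M :=
  funext (Complex.ofRealHom.map_vecMul M x)

theorem controllable_of_range_reachMap_eq_top {F : Matrix q q ℝ} {G : Matrix q r ℝ} {k : ℕ}
    (hk : LinearMap.range (reachMap F G k) = ⊤) : Controllable F G := fun x => by
  obtain ⟨u, hu⟩ := hk ▸ Submodule.mem_top (x := -(F ^ k *ᵥ x))
  exact ⟨k, u, by rw [← reachMap_apply, hu, add_neg_cancel]⟩

theorem controllable_of_PBH {F : Matrix q q ℝ} {G : Matrix q r ℝ}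
    (hFG : PBH (cpx F) (cpx G)) : Controllable F G := by
  suffices ∀ w : q → ℝ, (∀ i : ℕ, w ᵥ* (F ^ i * G) = 0) → w = 0 by
    obtain ⟨k, hk⟩ := exists_range_reachMap_eq_top F G this
    exact controllable_of_range_reachMap_eq_top hk
  intro w hw
  by_contra hw0
  have hcw0 : Complex.ofReal ∘ w ≠ 0 := fun h =>
    hw0 (funext fun i => Complex.ofReal_injective (congrFun h i))
  obtain ⟨s, v, hv0, hvF, hvG⟩ := exists_left_eigenvector_of_forall_vecMul_pow_mul_eq_zero
    hcw0 fun i => by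
      rw [← cpx_pow, ← cpx_mul, ← ofReal_comp_vecMul, hw i]
      exact funext fun _ => Complex.ofReal_zero
  exact hv0 (PBH_iff.mp hFG s v hvF hvG)

theorem dotProduct_ofReal_trajectory {F : Matrix q q ℝ} {G : Matrix q r ℝ} {s : ℂ}
    {v : q → ℂ} (hvF : v ᵥ* cpx F = s • v) (hvG : v ᵥ* cpx G = 0) (x : q → ℝ) {k : ℕ}
    (u : Fin k → r → ℝ) :
    v ⬝ᵥ (Complex.ofReal ∘ (F ^ k *ᵥ x + ∑ j : Fin k, F ^ (k - 1 - (j : ℕ)) *ᵥ (G *ᵥ u j))) =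
      s ^ k * v ⬝ᵥ (Complex.ofReal ∘ x) := by
  have hvFpow : ∀ i : ℕ, v ᵥ* cpx (F ^ i) = s ^ i • v := fun i => by
    induction i with
    | zero => simp [cpx_one]
    | succ i ih =>
      rw [pow_succ, cpx_mul, ← vecMul_vecMul, ih, smul_vecMul, hvF, smul_smul, pow_succ]
  have ofReal_comp_add : ∀ y z : q → ℝ,
      Complex.ofReal ∘ (y + z) = Complex.ofReal ∘ y + Complex.ofReal ∘ z :=
    fun y z => funext fun _ => Complex.ofReal_add _ _
  have ofReal_comp_sum : ∀ y : Fin k → q → ℝ,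
      Complex.ofReal ∘ (∑ j, y j) = ∑ j, Complex.ofReal ∘ y j :=
    fun y => funext fun _ => by simp
  simp only [ofReal_comp_add, ofReal_comp_sum, dotProduct_add, dotProduct_sum, ofReal_comp_mulVec,
    dotProduct_mulVec, hvFpow, smul_dotProduct, smul_vecMul, hvG, zero_dotProduct, smul_zero,
    Finset.sum_const_zero, add_zero, smul_eq_mul]

theorem PBH_of_controllable {F : Matrix q q ℝ} {G : Matrix q r ℝ} (hF : IsUnit F)
    (hFG : Controllable F G) : PBH (cpx F) (cpx G) := by
  refine PBH_iff.mpr fun s v hvF hvG => ?_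
  rcases eq_or_ne s 0 with rfl | hs
  · have hcF : IsUnit (cpx F) := hF.map Complex.ofRealHom.mapMatrix
    exact vecMul_injective_of_isUnit hcF (by simpa using hvF)
  ext i
  obtain ⟨k, u, hu⟩ := hFG (Pi.single i 1)
  have := dotProduct_ofReal_trajectory hvF hvG (Pi.single i 1) u
  rw [hu] at this
  simpa [hs, Function.comp_def, Pi.single_apply, apply_ite, dotProduct] using this

end Complexification

theorem stmt17_general
    (n m p N : ℕ)
    (h : ℝ) (hh : 0 < h)
    (B : Matrix (Fin n) (Fin p) ℝ) (C : Matrix (Fin m) (Fin n) ℝ)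
    (H : Matrix (Fin n) (Fin m) ℝ) (W : Matrix (Fin N) (Fin N) ℝ)
    (δ : Fin N → ℝ)
    (hinv : IsUnit (Real.exp h • (1 : Matrix (Fin N × Fin n) (Fin N × Fin n) ℝ) +
      (Real.exp h - 1) • (W ⊗ₖ (H * C)))) :
    Controllable
      (Real.exp h • (1 : Matrix (Fin N × Fin n) (Fin N × Fin n) ℝ) +
        (Real.exp h - 1) • (W ⊗ₖ (H * C)))
      ((Real.exp h - 1) • (Matrix.diagonal δ ⊗ₖ B)) ↔
      PBH (cpx ((1 : Matrix (Fin N × Fin n) (Fin N × Fin n) ℝ) + W ⊗ₖ (H * C)))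
        (cpx (Matrix.diagonal δ ⊗ₖ B)) := by
  have ha : ((Real.exp h - 1 : ℝ) : ℂ) ≠ 0 :=
    Complex.ofReal_ne_zero.mpr (sub_pos.mpr (Real.one_lt_exp_iff.mpr hh)).ne'
  have hPBH : PBH (cpx (Real.exp h • (1 : Matrix (Fin N × Fin n) (Fin N × Fin n) ℝ) +
        (Real.exp h - 1) • (W ⊗ₖ (H * C)))) (cpx ((Real.exp h - 1) • (diagonal δ ⊗ₖ B))) ↔
      PBH (cpx (1 + W ⊗ₖ (H * C))) (cpx (diagonal δ ⊗ₖ B)) := by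
    simp only [cpx_add, cpx_smul, cpx_one]
    rw [PBH_smul_right ha, PBH_smul_one_add_smul _ ha]
    simpa using (PBH_smul_one_add_smul (M := cpx (W ⊗ₖ (H * C))) (G := cpx (diagonal δ ⊗ₖ B))
      1 one_ne_zero).symm
  rw [← hPBH]
  exact ⟨PBH_of_controllable hinv, controllable_of_PBH⟩

theorem stmt17
    (n m p N : ℕ) (hn : 0 < n) (hm : 0 < m) (hp : 0 < p) (hN : 0 < N)
    (h : ℝ) (hh : 0 < h)
    (B : Matrix (Fin n) (Fin p) ℝ) (C : Matrix (Fin m) (Fin n) ℝ)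
    (H : Matrix (Fin n) (Fin m) ℝ) (W : Matrix (Fin N) (Fin N) ℝ)
    (δ : Fin N → ℝ) (hδ : ∀ i, δ i = 0 ∨ δ i = 1)
    (hinv : IsUnit (Real.exp h • (1 : Matrix (Fin N × Fin n) (Fin N × Fin n) ℝ) +
      (Real.exp h - 1) • (W ⊗ₖ (H * C)))) :
    Controllable
      (Real.exp h • (1 : Matrix (Fin N × Fin n) (Fin N × Fin n) ℝ) +
        (Real.exp h - 1) • (W ⊗ₖ (H * C)))
      ((Real.exp h - 1) • (Matrix.diagonal δ ⊗ₖ B)) ↔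
      PBH (cpx ((1 : Matrix (Fin N × Fin n) (Fin N × Fin n) ℝ) + W ⊗ₖ (H * C)))
        (cpx (Matrix.diagonal δ ⊗ₖ B)) :=
  stmt17_general n m p N h hh B C H W δ hinv
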